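/- Let M, T be real numbers with T ≥ 3 and 0 < β < 1. Then ∑_{1 ≤ n ≤ T} n^(−1/2) · min(T^β, 1/|log(M/n)|) ≤ C·max(T^β, T^(1/2)·log T) for an absolute constant C (independent of M), where terms with log(M/n) = 0 contribute T^β. -/

import Mathlib

/-!
For `n ≠ M` one has `1 / |log (M / n)| ≤ 1 + n / |n - M|`, so the `n`-th term is at most
`n^(-1/2) + √T / |n - M|`; for the at most two `n` with `|n - M| < 1` we use the bound `T^β`
instead. Now `∑ n^(-1/2) ≤ 2√T`, and on either side of `M` the distances `|n - M| ≥ 1` dominate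
distinct positive integers, so `∑ 1 / |n - M|` is at most two harmonic sums, each `≤ 1 + log T`.
-/

open Real Finset

theorem Finset.sum_le_sum_of_injOn {ι κ M : Type*} [AddCommMonoid M] [PartialOrder M]
    [IsOrderedAddMonoid M] {s : Finset ι} {t : Finset κ} (e : ι → κ) (he : Set.MapsTo e s t)
    (hinj : Set.InjOn e s) {f : ι → M} {g : κ → M} (hg : ∀ k ∈ t, 0 ≤ g k)
    (hfg : ∀ i ∈ s, f i ≤ g (e i)) : ∑ i ∈ s, f i ≤ ∑ k ∈ t, g k := by
  classical
  calc ∑ i ∈ s, f i ≤ ∑ i ∈ s, g (e i) := sum_le_sum hfg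
    _ = ∑ k ∈ s.image e, g k := (sum_image hinj).symm
    _ ≤ ∑ k ∈ t, g k :=
      sum_le_sum_of_subset_of_nonneg (image_subset_iff.2 he) fun k hk _ => hg k hk

theorem Real.inv_abs_log_le_one_add_inv_abs_sub_one {y : ℝ} (hy : 0 < y) :
    |log y|⁻¹ ≤ 1 + |y - 1|⁻¹ := by
  rcases lt_trichotomy y 1 with hy1 | rfl | hy1
  · have hlog : |y - 1| ≤ |log y| := by
      rw [abs_of_neg (sub_neg.2 hy1), abs_of_neg (log_neg hy hy1)]
      linarith [log_le_sub_one_of_pos hy]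
    have := inv_anti₀ (abs_pos.2 (sub_ne_zero.2 hy1.ne)) hlog
    linarith [inv_nonneg.2 (abs_nonneg (y - 1))]
  · simp
  · have hy0 : 0 < y - 1 := sub_pos.2 hy1
    have hlog : (y - 1) / y ≤ |log y| := by
      rw [abs_of_pos (log_pos hy1), sub_div, div_self hy.ne', one_div]
      exact one_sub_inv_le_log_of_pos hy
    calc |log y|⁻¹ ≤ ((y - 1) / y)⁻¹ := inv_anti₀ (by positivity) hlog
      _ = 1 + |y - 1|⁻¹ := by
        rw [abs_of_pos hy0, inv_div]; field_simp; ring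

theorem sum_Icc_inv_sqrt_le (N : ℕ) : ∑ n ∈ Icc 1 N, (√n)⁻¹ ≤ 2 * √N := by
  induction N with
  | zero => simp
  | succ N ih =>
    rw [sum_Icc_succ_top (by omega), Nat.cast_succ]
    have hN := sq_sqrt (Nat.cast_nonneg (α := ℝ) N)
    have hN1 := sq_sqrt (by positivity : (0 : ℝ) ≤ N + 1)
    have hstep : (√(N + 1 : ℝ))⁻¹ ≤ 2 * √(N + 1 : ℝ) - 2 * √N := by
      rw [inv_le_iff_one_le_mul₀ (by positivity)]
      nlinarith [sq_nonneg (√(N + 1 : ℝ) - √N)]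
    linarith

theorem sum_Icc_inv_le_one_add_log (N : ℕ) : ∑ i ∈ Icc 1 N, (i : ℝ)⁻¹ ≤ 1 + log N := by
  simpa [harmonic_eq_sum_Icc] using harmonic_le_one_add_log N

theorem sum_le_one_add_log_of_injOn {s : Finset ℕ} {N : ℕ} {f : ℕ → ℝ} (e : ℕ → ℕ)
    (he : Set.MapsTo e s (Icc 1 N)) (hinj : Set.InjOn e s) (hf : ∀ n ∈ s, f n ≤ (e n : ℝ)⁻¹) :
    ∑ n ∈ s, f n ≤ 1 + log N :=
  (sum_le_sum_of_injOn e he hinj (fun _ _ => by positivity) hf).trans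
    (sum_Icc_inv_le_one_add_log N)

theorem sum_inv_abs_sub_le (N : ℕ) (x : ℝ) :
    ∑ n ∈ (Icc 1 N).filter (fun n : ℕ => 1 ≤ |(n : ℝ) - x|), |(n : ℝ) - x|⁻¹ ≤ 2 * (1 + log N) := by
  set S := (Icc 1 N).filter fun n : ℕ => 1 ≤ |(n : ℝ) - x| with hS
  rw [← sum_filter_add_sum_filter_not S (fun n : ℕ => x ≤ n), two_mul]
  gcongr
  · -- the points `n ≥ x + 1`, indexed by `n - ⌈x⌉₊ ≥ 1`
    have hmem : ∀ n ∈ S.filter (fun n : ℕ => x ≤ n),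
        ⌈x⌉₊ + 1 ≤ n ∧ n ≤ N ∧ |(n : ℝ) - x| = n - x := by
      intro n hn
      simp only [hS, mem_filter, mem_Icc] at hn
      obtain ⟨⟨⟨hn1, hnN⟩, hgap⟩, hxn⟩ := hn
      rw [abs_of_nonneg (sub_nonneg.2 hxn)] at hgap ⊢
      have : ⌈x⌉₊ ≤ n - 1 := Nat.ceil_le.2 (by rw [Nat.cast_sub hn1]; push_cast; linarith)
      exact ⟨by omega, hnN, rfl⟩
    refine sum_le_one_add_log_of_injOn (fun n => n - ⌈x⌉₊) (fun n hn => ?_) (fun a ha b hb h => ?_)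
      (fun n hn => ?_)
    · have := hmem n hn
      simp only [coe_Icc, Set.mem_Icc]
      omega
    · have := hmem a ha
      have := hmem b hb
      simp only at h
      omega
    · obtain ⟨hn, -, habs⟩ := hmem n hn
      rw [habs, Nat.cast_sub (by omega)]
      exact inv_anti₀ (sub_pos.2 (by exact_mod_cast (by omega : ⌈x⌉₊ < n)))
        (by linarith [Nat.le_ceil x])
  · -- the points `n ≤ x - 1`, indexed by `min ⌊x⌋₊ (N + 1) - n ≥ 1`
    have hmem : ∀ n ∈ S.filter (fun n : ℕ => ¬ x ≤ n),
        1 ≤ n ∧ n + 1 ≤ ⌊x⌋₊ ∧ n ≤ N ∧ |(n : ℝ) - x| = x - n := by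
      intro n hn
      simp only [hS, mem_filter, mem_Icc, not_le] at hn
      obtain ⟨⟨⟨hn1, hnN⟩, hgap⟩, hxn⟩ := hn
      rw [abs_of_neg (sub_neg.2 hxn), neg_sub] at hgap ⊢
      exact ⟨hn1, Nat.le_floor (by push_cast; linarith), hnN, rfl⟩
    refine sum_le_one_add_log_of_injOn (fun n => min ⌊x⌋₊ (N + 1) - n) (fun n hn => ?_)
      (fun a ha b hb h => ?_) (fun n hn => ?_)
    · have := hmem n hn
      simp only [coe_Icc, Set.mem_Icc]
      omega
    · have := hmem a ha
      have := hmem b hb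
      simp only at h
      omega
    · obtain ⟨-, hn, hnN, habs⟩ := hmem n hn
      have hfloor : (⌊x⌋₊ : ℝ) ≤ x :=
        Nat.floor_le (by linarith [Nat.floor_pos.1 (by omega : 0 < ⌊x⌋₊)])
      have hmin : ((min ⌊x⌋₊ (N + 1) : ℕ) : ℝ) ≤ ⌊x⌋₊ := by exact_mod_cast min_le_left _ _
      rw [habs, Nat.cast_sub (by omega)]
      exact inv_anti₀ (sub_pos.2 (by exact_mod_cast (by omega : n < min ⌊x⌋₊ (N + 1))))
        (by linarith)

theorem card_filter_abs_sub_lt_one_le_two (s : Finset ℕ) (x : ℝ) :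
    #(s.filter fun n : ℕ => |(n : ℝ) - x| < 1) ≤ 2 := by
  calc #(s.filter fun n : ℕ => |(n : ℝ) - x| < 1) ≤ #(Icc ⌊x⌋₊ (⌊x⌋₊ + 1)) := by
        refine card_le_card fun n hn => ?_
        obtain ⟨hlo, hhi⟩ := abs_lt.1 (mem_filter.1 hn).2
        have h1 : ⌊x⌋₊ < n + 1 := (Nat.floor_lt' n.succ_ne_zero).2 (by push_cast; linarith)
        have h2 : n < ⌊x⌋₊ + 2 := by
          exact_mod_cast (by linarith [Nat.lt_floor_add_one x] : (n : ℝ) < ⌊x⌋₊ + 2)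
        rw [mem_Icc]
        omega
    _ = 2 := by simp; omega

noncomputable def truncInvAbsLog (A y : ℝ) : ℝ :=
  if log y = 0 then A else min A (1 / |log y|)

theorem truncInvAbsLog_le (A y : ℝ) : truncInvAbsLog A y ≤ A := by
  unfold truncInvAbsLog
  split_ifs
  exacts [le_rfl, min_le_left _ _]

theorem truncInvAbsLog_nonneg {A : ℝ} (hA : 0 ≤ A) (y : ℝ) : 0 ≤ truncInvAbsLog A y := by
  unfold truncInvAbsLog
  split_ifs
  exacts [hA, le_min hA (by positivity)]

theorem truncInvAbsLog_le_one_add {A y : ℝ} (hy : 0 < y) (hy1 : y ≠ 1) :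
    truncInvAbsLog A y ≤ 1 + |y - 1|⁻¹ := by
  rw [truncInvAbsLog, if_neg (log_ne_zero_of_pos_of_ne_one hy hy1), one_div]
  exact (min_le_right _ _).trans (inv_abs_log_le_one_add_inv_abs_sub_one hy)

theorem inv_sqrt_mul_truncInvAbsLog_le {A M : ℝ} (hA : 0 ≤ A) (hM : 0 < M) {n N : ℕ}
    (hn : 1 ≤ n) (hnN : n ≤ N) :
    (√n)⁻¹ * truncInvAbsLog A (M / n) ≤
      (√n)⁻¹ + if |(n : ℝ) - M| < 1 then A else √N * |(n : ℝ) - M|⁻¹ := by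
  have hn0 : (0 : ℝ) < n := by exact_mod_cast hn
  have hsqrt : 1 ≤ √n := one_le_sqrt.2 (by exact_mod_cast hn)
  split_ifs with hnear
  · calc (√n)⁻¹ * truncInvAbsLog A (M / n) ≤ 1 * A :=
          mul_le_mul (inv_le_one_of_one_le₀ hsqrt) (truncInvAbsLog_le A _)
            (truncInvAbsLog_nonneg hA _) zero_le_one
      _ ≤ (√n)⁻¹ + A := by linarith [inv_nonneg.2 (sqrt_nonneg (n : ℝ))]
  · have hMn : M / n ≠ 1 := fun h => hnear (by
      rw [(div_eq_one_iff_eq hn0.ne').1 h, sub_self, abs_zero]; exact one_pos)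
    have hdist : |M / n - 1|⁻¹ = n * |(n : ℝ) - M|⁻¹ := by
      rw [div_sub_one hn0.ne', abs_div, abs_of_pos hn0, inv_div, abs_sub_comm, div_eq_mul_inv]
    have hsqrtN : √n ≤ √N := sqrt_le_sqrt (by exact_mod_cast hnN)
    calc (√n)⁻¹ * truncInvAbsLog A (M / n) ≤ (√n)⁻¹ * (1 + n * |(n : ℝ) - M|⁻¹) := by
          rw [← hdist]
          exact mul_le_mul_of_nonneg_left (truncInvAbsLog_le_one_add (by positivity) hMn)
            (by positivity)
      _ = (√n)⁻¹ + √n * |(n : ℝ) - M|⁻¹ := by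
          rw [mul_add, mul_one, ← mul_assoc, ← div_eq_inv_mul, div_sqrt]
      _ ≤ (√n)⁻¹ + √N * |(n : ℝ) - M|⁻¹ := by gcongr

theorem sum_inv_sqrt_mul_truncInvAbsLog_le {A M : ℝ} (hA : 0 ≤ A) (hM : 0 < M) (N : ℕ) :
    ∑ n ∈ Icc 1 N, (√n)⁻¹ * truncInvAbsLog A (M / n) ≤ 2 * A + 2 * √N * (2 + log N) := by
  calc ∑ n ∈ Icc 1 N, (√n)⁻¹ * truncInvAbsLog A (M / n)
      ≤ ∑ n ∈ Icc 1 N, ((√n)⁻¹ + if |(n : ℝ) - M| < 1 then A else √N * |(n : ℝ) - M|⁻¹) :=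
        sum_le_sum fun n hn =>
          inv_sqrt_mul_truncInvAbsLog_le hA hM (mem_Icc.1 hn).1 (mem_Icc.1 hn).2
    _ = ∑ n ∈ Icc 1 N, (√n)⁻¹ + (#((Icc 1 N).filter fun n : ℕ => |(n : ℝ) - M| < 1) * A +
          √N * ∑ n ∈ (Icc 1 N).filter (fun n : ℕ => 1 ≤ |(n : ℝ) - M|), |(n : ℝ) - M|⁻¹) := by
        simp only [sum_add_distrib, sum_ite, sum_const, nsmul_eq_mul, not_lt, mul_sum]
    _ ≤ 2 * √N + (2 * A + √N * (2 * (1 + log N))) := by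
        gcongr
        · exact sum_Icc_inv_sqrt_le N
        · exact_mod_cast card_filter_abs_sub_lt_one_le_two _ M
        · exact sum_inv_abs_sub_le N M
    _ = 2 * A + 2 * √N * (2 + log N) := by ring

theorem resonator_small_t_sum_bound :
    ∃ C > 0, ∀ (M T β : ℝ), 0 < M → 3 ≤ T → 0 < β → β < 1 →
      ∑ n ∈ Finset.Icc 1 ⌊T⌋₊,
          (Real.sqrt n)⁻¹ *
            (if Real.log (M / n) = 0 then T ^ β
             else min (T ^ β) (1 / |Real.log (M / n)|)) ≤
        C * max (T ^ β) (T ^ ((1 : ℝ) / 2) * Real.log T) := by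
  refine ⟨8, by norm_num, fun M T β hM hT _ _ => ?_⟩
  have hT0 : 0 < T := by linarith
  have hNT : (⌊T⌋₊ : ℝ) ≤ T := Nat.floor_le hT0.le
  have hN0 : (0 : ℝ) < ⌊T⌋₊ := by exact_mod_cast Nat.floor_pos.2 (by linarith)
  have hlogT : 1 ≤ log T := by
    rw [le_log_iff_exp_le hT0]; linarith [exp_one_lt_d9]
  have hlog : log ⌊T⌋₊ ≤ log T := log_le_log hN0 hNT
  calc _ = ∑ n ∈ Icc 1 ⌊T⌋₊, (√n)⁻¹ * truncInvAbsLog (T ^ β) (M / n) := rfl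
    _ ≤ 2 * T ^ β + 2 * √⌊T⌋₊ * (2 + log ⌊T⌋₊) :=
        sum_inv_sqrt_mul_truncInvAbsLog_le (rpow_nonneg hT0.le β) hM ⌊T⌋₊
    _ ≤ 2 * T ^ β + 2 * √T * (3 * log T) := by gcongr; linarith
    _ ≤ 8 * max (T ^ β) (T ^ ((1 : ℝ) / 2) * log T) := by
        rw [← sqrt_eq_rpow]
        linarith [le_max_left (T ^ β) (√T * log T), le_max_right (T ^ β) (√T * log T)]
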